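/- arXiv:2110.10277 — 3 statements merged into one kernel-verified Lean document; each statement's English description precedes it below -/
import Mathlib

section
/- Let X : Ω → 𝒳 and η : Ω → ℝ^m be independent random elements on a probability space, let G : ℝ^m × 𝒳 → ℝ be measurable, and let Y : Ω → ℝ be integrable. Assume the joint law of (X, G(η, X)) equals the joint law of (X, Y). Define g(x) = ∫_{ℝ^m} G(e, x) dP_η(e), where P_η is the law of η. Then E[Y | X] = g(X) almost surely. If moreover Y is square-integrable, then for P_X-almost every x (where P_X is the law of X) the conditional variance satisfies Var(Y | X = x) = ∫_{ℝ^m} (G(e, x) − g(x))² dP_η(e). -/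
/-!
Let `κ x` be the law of `G(η, x)` for a fixed `x`. Independence of `X` and `η` makes the law of
`(X, η)` the product `P_X ⊗ P_η`; pushing it forward along `(x, e) ↦ (x, G(e, x))` gives
`P_X ⊗ₘ κ`. By the assumption on the joint laws this is also the law of `(X, Y)`, so `κ` is a
version of the conditional distribution of `Y` given `X`. The conditional mean and variance are
then the mean and variance of `κ x`, i.e. of `G(·, x)` under `P_η`.
-/

open MeasureTheory ProbabilityTheory

namespace ProbabilityTheory

section

variable {E 𝒳 β : Type*} [MeasurableSpace E] [MeasurableSpace 𝒳] [MeasurableSpace β]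
  {ν : Measure E} {G : E × 𝒳 → β}

variable (ν G) in
noncomputable def generatorKernel : Kernel 𝒳 β :=
  (Kernel.const 𝒳 ν ×ₖ Kernel.id).map G

lemma isMarkovKernel_generatorKernel [IsProbabilityMeasure ν] (hG : Measurable G) :
    IsMarkovKernel (generatorKernel ν G) :=
  Kernel.IsMarkovKernel.map _ hG

variable [SFinite ν]

instance : IsSFiniteKernel (generatorKernel ν G) := by
  unfold generatorKernel
  infer_instance

lemma generatorKernel_apply (hG : Measurable G) (x : 𝒳) :
    generatorKernel ν G x = ν.map (fun e => G (e, x)) := by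
  rw [generatorKernel, Kernel.map_apply _ hG, Kernel.prod_apply, Kernel.const_apply,
    Kernel.id_apply, Measure.prod_dirac, Measure.map_map hG measurable_prodMk_right]
  rfl

lemma map_prod_eq_compProd_generatorKernel (μ : Measure 𝒳) [SFinite μ] (hG : Measurable G) :
    (μ.prod ν).map (fun p => (p.1, G (p.2, p.1))) = μ ⊗ₘ generatorKernel ν G := by
  have hf : Measurable (fun p : 𝒳 × E => (p.1, G (p.2, p.1))) := by fun_prop
  ext s hs
  rw [Measure.map_apply hf hs, Measure.compProd_apply hs, Measure.prod_apply (hf hs)]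
  refine lintegral_congr fun x => ?_
  have hGx : Measurable fun e => G (e, x) := by fun_prop
  rw [generatorKernel_apply hG, Measure.map_apply hGx (measurable_prodMk_left hs)]
  rfl

lemma integral_id_generatorKernel {G : E × 𝒳 → ℝ} (hG : Measurable G) (x : 𝒳) :
    ∫ y, y ∂generatorKernel ν G x = ∫ e, G (e, x) ∂ν := by
  rw [generatorKernel_apply hG, integral_map (f := fun y => y) (by fun_prop) (by fun_prop)]

lemma variance_id_generatorKernel {G : E × 𝒳 → ℝ} (hG : Measurable G) (x : 𝒳) :
    variance id (generatorKernel ν G x) = variance (fun e => G (e, x)) ν := by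
  rw [generatorKernel_apply hG, variance_id_map (by fun_prop)]

end

section

variable {E 𝒳 β Ω : Type*} [MeasurableSpace E] [MeasurableSpace 𝒳] [MeasurableSpace β]
  [MeasurableSpace Ω] {P : Measure Ω} [IsProbabilityMeasure P] {X : Ω → 𝒳} {η : Ω → E}
  {G : E × 𝒳 → β}

lemma map_generator_eq_compProd_generatorKernel (hX : Measurable X) (hη : Measurable η)
    (hind : IndepFun X η P) (hG : Measurable G) :
    P.map (fun ω => (X ω, G (η ω, X ω))) = P.map X ⊗ₘ generatorKernel (P.map η) G := by
  have hf : Measurable (fun p : 𝒳 × E => (p.1, G (p.2, p.1))) := by fun_prop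
  rw [← map_prod_eq_compProd_generatorKernel _ hG,
    ← (indepFun_iff_map_prod_eq_prod_map_map hX.aemeasurable hη.aemeasurable).mp hind,
    Measure.map_map hf (hX.prodMk hη)]
  rfl

lemma condDistrib_ae_eq_generatorKernel [StandardBorelSpace β] [Nonempty β]
    (hX : Measurable X) (hη : Measurable η) (hind : IndepFun X η P) (hG : Measurable G) {Y : Ω → β} (hY : AEMeasurable Y P)
    (hlaw : P.map (fun ω => (X ω, G (η ω, X ω))) = P.map (fun ω => (X ω, Y ω))) :
    condDistrib Y X P =ᵐ[P.map X] generatorKernel (P.map η) G := by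
  have : IsProbabilityMeasure (P.map η) := Measure.isProbabilityMeasure_map hη.aemeasurable
  have : IsMarkovKernel (generatorKernel (P.map η) G) := isMarkovKernel_generatorKernel hG
  exact condDistrib_ae_eq_of_measure_eq_compProd X hY
    (hlaw ▸ map_generator_eq_compProd_generatorKernel hX hη hind hG)

end

end ProbabilityTheory

/-- If the joint law of `(X, G(η, X))` equals that of `(X, Y)` with `η` independent of `X`
and `Y` integrable, then `E[Y | X] = g(X)` a.s., where `g(x) = ∫ G(e, x) dP_η(e)`; and if
`Y` is square-integrable, then for `P_X`-a.e. `x` the conditional variance of `Y` given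
`X = x` equals `∫ (G(e, x) − g(x))² dP_η(e)`. -/
theorem conditional_mean_and_variance_from_generator
    {Ω 𝒳 : Type} [MeasurableSpace Ω] [m𝒳 : MeasurableSpace 𝒳]
    (P : Measure Ω) [IsProbabilityMeasure P] {m : ℕ}
    (X : Ω → 𝒳) (η : Ω → (Fin m → ℝ)) (Y : Ω → ℝ)
    (hX : Measurable X) (hη : Measurable η) (hY : Measurable Y)
    (hind : IndepFun X η P)
    (G : (Fin m → ℝ) × 𝒳 → ℝ) (hG : Measurable G)
    (hYint : Integrable Y P)
    (hlaw : P.map (fun ω => (X ω, G (η ω, X ω))) = P.map (fun ω => (X ω, Y ω)))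
    (g : 𝒳 → ℝ) (hg : ∀ x, g x = ∫ e, G (e, x) ∂(P.map η)) :
    (P[Y | m𝒳.comap X] =ᵐ[P] fun ω => g (X ω)) ∧
    (MemLp Y 2 P → ∀ᵐ x ∂(P.map X),
      variance id (condDistrib Y X P x) = ∫ e, (G (e, x) - g x) ^ 2 ∂(P.map η)) := by
  have hcond := condDistrib_ae_eq_generatorKernel hX hη hind hG hY.aemeasurable hlaw
  refine ⟨?_, fun _ => ?_⟩
  · filter_upwards [condExp_ae_eq_integral_condDistrib' hX hYint,
      ae_of_ae_map hX.aemeasurable hcond] with ω hmean hκ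
    rw [hmean, hκ, integral_id_generatorKernel hG, hg]
  · filter_upwards [hcond] with x hκ
    have hGx : Measurable fun e => G (e, x) := by fun_prop
    rw [hκ, variance_id_generatorKernel hG, variance_eq_integral hGx.aemeasurable, hg]
end

section
/- Dual form of the Kullback–Leibler divergence: Let μ be a σ-finite measure on a measurable space Z and let p, q be probability densities with respect to μ such that the density ratio r = q/p satisfies 0 < C₁ ≤ r(z) ≤ C₂ < ∞ for μ-a.e. z, for some constants C₁, C₂. Then D_KL(q‖p) = sup_D { ∫ D q dμ − ∫ e^{D} p dμ } + 1, where the supremum is taken over all bounded measurable functions D : Z → ℝ, and the supremum is attained at D = log r. -/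
/-!
The pointwise inequality `t a - eᵗ b ≤ a log (a / b) - a` (for `a, b > 0`; this is `1 + s ≤ eˢ`
at `s = t - log (a / b)`) is the Fenchel–Young inequality for `exp`, with equality at
`t = log (a / b)`. Integrating it against `μ` with `a = q`, `b = p` bounds every dual value by
`D_KL(q‖p) - 1`. The bound is attained by `log r`, which the ratio bounds make bounded: clipping
`r` below at `C₁` and above at `C₂` gives an everywhere bounded measurable representative.
-/

open MeasureTheory

namespace Real

theorem mul_sub_exp_mul_le_mul_log_div_sub {a b : ℝ} (ha : 0 < a) (hb : 0 < b) (t : ℝ) :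
    t * a - exp t * b ≤ a * log (a / b) - a := by
  have hexp : exp (t - log (a / b)) * a = exp t * b := by
    rw [exp_sub, exp_log (div_pos ha hb)]
    field_simp
  nlinarith [mul_le_mul_of_nonneg_right (add_one_le_exp (t - log (a / b))) ha.le]

theorem abs_log_le_max_abs_log {C₁ C₂ x : ℝ} (hC₁ : 0 < C₁) (h₁ : C₁ ≤ x) (h₂ : x ≤ C₂) :
    |log x| ≤ max |log C₁| |log C₂| :=
  abs_le_max_abs_abs (log_le_log hC₁ h₁) (log_le_log (hC₁.trans_le h₁) h₂)

end Real

open Real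

section DualForm

variable {Z : Type*} [MeasurableSpace Z] {μ : Measure Z} {p q : Z → ℝ}

theorem ae_pos_of_le_div (hp0 : 0 ≤ᵐ[μ] p) {C : ℝ} (hC : 0 < C)
    (hr : ∀ᵐ z ∂μ, C ≤ q z / p z) : ∀ᵐ z ∂μ, 0 < p z ∧ 0 < q z := by
  filter_upwards [hp0, hr] with z hpz hrz
  have hpos : 0 < p z := (show (0 : ℝ) ≤ p z from hpz).lt_of_ne fun h => by
    rw [← h, div_zero] at hrz
    linarith
  have hq : 0 < q z / p z * p z := mul_pos (hC.trans_le hrz) hpos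
  exact ⟨hpos, by rwa [div_mul_cancel₀ _ hpos.ne'] at hq⟩

theorem integrable_mul_log_div (hq : Integrable q μ) (hqp : Measurable fun z => q z / p z)
    {C₁ C₂ : ℝ} (hC₁ : 0 < C₁) (hr : ∀ᵐ z ∂μ, C₁ ≤ q z / p z ∧ q z / p z ≤ C₂) :
    Integrable (fun z => q z * log (q z / p z)) μ := by
  have hlog : Integrable (fun z => log (q z / p z) * q z) μ :=
    hq.bdd_mul hqp.log.aestronglyMeasurable <| by
      filter_upwards [hr] with z ⟨h₁, h₂⟩
      exact abs_log_le_max_abs_log hC₁ h₁ h₂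
  simpa only [mul_comm] using hlog

theorem exists_measurable_bounded_ae_eq_log {f : Z → ℝ} (hf : Measurable f) {C₁ C₂ : ℝ}
    (hC₁ : 0 < C₁) (hbd : ∀ᵐ z ∂μ, C₁ ≤ f z ∧ f z ≤ C₂) :
    ∃ D : Z → ℝ, Measurable D ∧ (∃ M : ℝ, ∀ z, |D z| ≤ M) ∧
      D =ᵐ[μ] fun z => log (f z) := by
  refine ⟨fun z => log (max C₁ (min C₂ (f z))), (measurable_const.max
    (measurable_const.min hf)).log, ⟨max |log C₁| |log (max C₁ C₂)|, fun z => ?_⟩, ?_⟩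
  · exact abs_log_le_max_abs_log hC₁ (le_max_left _ _)
      (max_le_max le_rfl (min_le_left _ _))
  · filter_upwards [hbd] with z ⟨h₁, h₂⟩
    rw [min_eq_right h₂, max_eq_right h₁]

theorem integral_mul_sub_integral_exp_mul_le (hp : Integrable p μ) (hq : Integrable q μ)
    (hpos : ∀ᵐ z ∂μ, 0 < p z ∧ 0 < q z) (hkl : Integrable (fun z => q z * log (q z / p z)) μ)
    {D : Z → ℝ} (hD : AEStronglyMeasurable D μ) {M : ℝ} (hM : ∀ z, |D z| ≤ M) :
    ∫ z, D z * q z ∂μ - ∫ z, exp (D z) * p z ∂μ ≤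
      ∫ z, q z * log (q z / p z) ∂μ - ∫ z, q z ∂μ := by
  have hDq : Integrable (fun z => D z * q z) μ :=
    hq.bdd_mul hD (Filter.Eventually.of_forall hM)
  have hexpDp : Integrable (fun z => exp (D z) * p z) μ :=
    hp.bdd_mul (continuous_exp.comp_aestronglyMeasurable hD) <|
      Filter.Eventually.of_forall fun z => by
        rw [norm_of_nonneg (exp_pos _).le]
        exact exp_le_exp.mpr (abs_le.mp (hM z)).2
  rw [← integral_sub hDq hexpDp, ← integral_sub hkl hq]
  refine integral_mono_ae (hDq.sub hexpDp) (hkl.sub hq) ?_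
  filter_upwards [hpos] with z ⟨hpz, hqz⟩
  exact mul_sub_exp_mul_le_mul_log_div_sub hqz hpz (D z)

theorem integral_mul_sub_integral_exp_mul_of_ae_eq_log_div
    (hpos : ∀ᵐ z ∂μ, 0 < p z ∧ 0 < q z) {D : Z → ℝ}
    (hD : D =ᵐ[μ] fun z => log (q z / p z)) :
    ∫ z, D z * q z ∂μ - ∫ z, exp (D z) * p z ∂μ =
      ∫ z, q z * log (q z / p z) ∂μ - ∫ z, q z ∂μ := by
  congr 1
  · refine integral_congr_ae ?_
    filter_upwards [hD] with z hz
    rw [hz, mul_comm]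
  · refine integral_congr_ae ?_
    filter_upwards [hD, hpos] with z hz ⟨hpz, hqz⟩
    rw [hz, exp_log (div_pos hqz hpz), div_mul_cancel₀ _ hpz.ne']

end DualForm

theorem kl_divergence_dual_form_general
    {Z : Type} [MeasurableSpace Z] (μ : Measure Z)
    (p q : Z → ℝ) (hp : Measurable p) (hq : Measurable q)
    (hp0 : 0 ≤ᵐ[μ] p)
    (hpint : ∫ z, p z ∂μ = 1) (hqint : ∫ z, q z ∂μ = 1)
    (C₁ C₂ : ℝ) (hC₁ : 0 < C₁)
    (hr : ∀ᵐ z ∂μ, C₁ ≤ q z / p z ∧ q z / p z ≤ C₂) :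
    (∫ z, q z * Real.log (q z / p z) ∂μ =
      sSup {y : ℝ | ∃ D : Z → ℝ, Measurable D ∧ (∃ M : ℝ, ∀ z, |D z| ≤ M) ∧
        y = ∫ z, D z * q z ∂μ - ∫ z, Real.exp (D z) * p z ∂μ} + 1) ∧
    (∫ z, Real.log (q z / p z) * q z ∂μ - ∫ z, Real.exp (Real.log (q z / p z)) * p z ∂μ
      = ∫ z, q z * Real.log (q z / p z) ∂μ - 1) := by
  have hpInt := integrable_of_integral_eq_one hpint
  have hqInt := integrable_of_integral_eq_one hqint
  have hpos := ae_pos_of_le_div hp0 hC₁ (hr.mono fun _ h => h.1)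
  have hkl := integrable_mul_log_div hqInt (hq.div hp) hC₁ hr
  have hattained := integral_mul_sub_integral_exp_mul_of_ae_eq_log_div hpos
    (Filter.EventuallyEq.refl _ fun z => log (q z / p z))
  rw [hqint] at hattained
  obtain ⟨D₀, hD₀, hD₀bdd, hD₀log⟩ := exists_measurable_bounded_ae_eq_log (hq.div hp) hC₁ hr
  have hgreatest : IsGreatest {y : ℝ | ∃ D : Z → ℝ, Measurable D ∧ (∃ M : ℝ, ∀ z, |D z| ≤ M) ∧
      y = ∫ z, D z * q z ∂μ - ∫ z, exp (D z) * p z ∂μ}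
      (∫ z, q z * log (q z / p z) ∂μ - 1) := by
    refine ⟨⟨D₀, hD₀, hD₀bdd, ?_⟩, ?_⟩
    · rw [integral_mul_sub_integral_exp_mul_of_ae_eq_log_div hpos hD₀log, hqint]
    · rintro y ⟨D, hD, ⟨M, hM⟩, rfl⟩
      simpa only [hqint] using
        integral_mul_sub_integral_exp_mul_le hpInt hqInt hpos hkl hD.aestronglyMeasurable hM
  exact ⟨by rw [hgreatest.csSup_eq]; ring, hattained⟩

/-- Dual form of the Kullback–Leibler divergence: if the density ratio `r = q/p` satisfies
`0 < C₁ ≤ r ≤ C₂ < ∞` a.e., then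
`D_KL(q‖p) = sup_D { ∫ D q dμ − ∫ e^D p dμ } + 1`, the supremum being over all bounded
measurable `D`, and it is attained at `D = log r`. -/
theorem kl_divergence_dual_form
    {Z : Type} [MeasurableSpace Z] (μ : Measure Z) [SigmaFinite μ]
    (p q : Z → ℝ) (hp : Measurable p) (hq : Measurable q)
    (hp0 : 0 ≤ᵐ[μ] p) (hq0 : 0 ≤ᵐ[μ] q)
    (hpint : ∫ z, p z ∂μ = 1) (hqint : ∫ z, q z ∂μ = 1)
    (C₁ C₂ : ℝ) (hC₁ : 0 < C₁)
    (hr : ∀ᵐ z ∂μ, C₁ ≤ q z / p z ∧ q z / p z ≤ C₂) :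
    (∫ z, q z * Real.log (q z / p z) ∂μ =
      sSup {y : ℝ | ∃ D : Z → ℝ, Measurable D ∧ (∃ M : ℝ, ∀ z, |D z| ≤ M) ∧
        y = ∫ z, D z * q z ∂μ - ∫ z, Real.exp (D z) * p z ∂μ} + 1) ∧
    (∫ z, Real.log (q z / p z) * q z ∂μ - ∫ z, Real.exp (Real.log (q z / p z)) * p z ∂μ
      = ∫ z, q z * Real.log (q z / p z) ∂μ - 1) :=
  kl_divergence_dual_form_general μ p q hp hq hp0 hpint hqint C₁ C₂ hC₁ hr
end

section
/- Fenchel conjugate of the Jensen–Shannon generator: Let f(x) = x log x − (x+1) log((1+x)/2) for x > 0. Then for every t < log 2, sup_{x>0} (t x − f(x)) = −log(2 − e^t), and the supremum is attained at x = e^t/(2 − e^t). -/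
/-!
Write `s = eᵗ ∈ (0, 2)`. For `x > 0` one has
`t x − f x + log (2 − s) = x log (s (1 + x) / (2 x)) + log ((2 − s) (1 + x) / 2)`,
and bounding both logarithms by `log u ≤ u − 1` gives
`x (s (1 + x) / (2 x) − 1) + ((2 − s) (1 + x) / 2 − 1) = 0`.
Both arguments of the logarithms equal `1` exactly at `x = s / (2 − s)`.
-/

open Real

noncomputable def jsGenerator (x : ℝ) : ℝ := x * log x - (x + 1) * log ((1 + x) / 2)

section

variable {s : ℝ}

lemma log_mul_sub_jsGenerator_add_log_two_sub (hs0 : 0 < s) (hs2 : s < 2) {x : ℝ} (hx : 0 < x) :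
    log s * x - jsGenerator x + log (2 - s)
      = x * log (s * (1 + x) / (2 * x)) + log ((2 - s) * (1 + x) / 2) := by
  have hx1 : 1 + x ≠ 0 := by positivity
  rw [jsGenerator, log_div (mul_ne_zero hs0.ne' hx1) (by positivity), log_mul hs0.ne' hx1,
    log_mul two_ne_zero hx.ne', mul_div_assoc (2 - s), log_mul (by linarith) (by positivity),
    log_div hx1 two_ne_zero]
  ring

lemma log_mul_sub_jsGenerator_le (hs0 : 0 < s) (hs2 : s < 2) {x : ℝ} (hx : 0 < x) :
    log s * x - jsGenerator x ≤ -log (2 - s) := by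
  have h2s : 0 < 2 - s := by linarith
  suffices x * log (s * (1 + x) / (2 * x)) + log ((2 - s) * (1 + x) / 2) ≤ 0 by
    linarith [log_mul_sub_jsGenerator_add_log_two_sub hs0 hs2 hx]
  calc x * log (s * (1 + x) / (2 * x)) + log ((2 - s) * (1 + x) / 2)
      ≤ x * (s * (1 + x) / (2 * x) - 1) + ((2 - s) * (1 + x) / 2 - 1) := by
        gcongr
        · exact log_le_sub_one_of_pos (by positivity)
        · exact log_le_sub_one_of_pos (by positivity)
    _ = 0 := by field_simp; ring

lemma log_mul_sub_jsGenerator_div_two_sub (hs0 : 0 < s) (hs2 : s < 2) :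
    log s * (s / (2 - s)) - jsGenerator (s / (2 - s)) = -log (2 - s) := by
  have h2s : 0 < 2 - s := by linarith
  have hx : 0 < s / (2 - s) := by positivity
  have h1 : s * (1 + s / (2 - s)) / (2 * (s / (2 - s))) = 1 := by field_simp; ring
  have h2 : (2 - s) * (1 + s / (2 - s)) / 2 = 1 := by field_simp; ring
  have := log_mul_sub_jsGenerator_add_log_two_sub hs0 hs2 hx
  rw [h1, h2, log_one] at this
  linarith

end

/-- Fenchel conjugate of the Jensen–Shannon generator
`f(x) = x log x − (x+1) log((1+x)/2)`: for every `t < log 2`,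
`sup_{x>0} (t x − f x) = −log(2 − e^t)`, attained at `x = e^t / (2 − e^t)`. -/
theorem fenchel_conjugate_js_generator
    (f : ℝ → ℝ)
    (hf : ∀ x : ℝ, 0 < x → f x = x * Real.log x - (x + 1) * Real.log ((1 + x) / 2))
    (t : ℝ) (ht : t < Real.log 2) :
    IsGreatest ((fun x : ℝ => t * x - f x) '' Set.Ioi 0)
      (-Real.log (2 - Real.exp t)) ∧
    t * (Real.exp t / (2 - Real.exp t)) - f (Real.exp t / (2 - Real.exp t))
      = -Real.log (2 - Real.exp t) := by
  have hs0 : 0 < exp t := exp_pos t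
  have hs2 : exp t < 2 := by rwa [← exp_lt_exp, exp_log two_pos] at ht
  have hf' : ∀ x, 0 < x → t * x - f x = log (exp t) * x - jsGenerator x := by
    intro x hx
    rw [log_exp, hf x hx, jsGenerator]
  have hx0 : 0 < exp t / (2 - exp t) := div_pos hs0 (by linarith)
  have hval : t * (exp t / (2 - exp t)) - f (exp t / (2 - exp t)) = -log (2 - exp t) := by
    rw [hf' _ hx0]
    exact log_mul_sub_jsGenerator_div_two_sub hs0 hs2
  refine ⟨⟨⟨_, hx0, hval⟩, ?_⟩, hval⟩
  rintro _ ⟨x, hx, rfl⟩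
  simpa only [hf' x hx] using log_mul_sub_jsGenerator_le hs0 hs2 hx
end
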